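/- The divided difference operators satisfy: for $k, p, r \in \mathbb{Z}$ and $i \geq 0$, $\partial_i^x({}^k c^r_p) = {}^{k-1} c^r_{p-1}$ if $k = \pm i$, and $\partial_i^x({}^k c^r_p) = 0$ otherwise. Here ${}^k c^{k'}_p := \sum_{i,j \geq 0} c_{p-i-j} h^{-k}_i(X) h^{k'}_j(-Y)$, with $h^r_j := h_j$ in the first $r$ variables for $r \geq 0$ and $h^r_j := e_j$ in the first $-r$ variables for $r < 0$. -/

import Mathlib

noncomputable section
open MvPolynomial

/-- The element `c_p` of the free polynomial ring `ℤ[c_1, c_2, …]`, with the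
conventions `c_0 = 1` and `c_p = 0` for `p < 0`. -/
def cFree : ℤ → MvPolynomial ℕ ℤ := fun p =>
  if p ≤ 0 then (if p = 0 then 1 else 0) else X (p.toNat - 1)

/-- The relation `c_p² + 2 ∑_{i=1}^p (-1)^i c_{p+i} c_{p-i}`. -/
def relC (p : ℕ) : MvPolynomial ℕ ℤ :=
  cFree (p : ℤ) ^ 2 +
    2 * ∑ i ∈ Finset.Icc 1 p,
      (-1 : MvPolynomial ℕ ℤ) ^ i * cFree ((p : ℤ) + i) * cFree ((p : ℤ) - i)

/-- The ideal generated by the relations `relC p` for `p ≥ 1`. -/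
def IGam : Ideal (MvPolynomial ℕ ℤ) := Ideal.span {f | ∃ p : ℕ, 1 ≤ p ∧ f = relC p}

/-- The ring `Γ`. -/
abbrev GammaR := MvPolynomial ℕ ℤ ⧸ IGam

/-- The class of `c_p` in `Γ`. -/
def cQ : ℤ → GammaR := fun p => Ideal.Quotient.mk IGam (cFree p)

/-- The elementary symmetric polynomial `e_j` evaluated at the family `v i`,
`i ∈ s`. -/
def esymF {R : Type*} [CommRing R] {σ : Type*} [DecidableEq σ]
    (s : Finset σ) (v : σ → R) (j : ℕ) : R :=
  ∑ t ∈ Finset.powersetCard j s, ∏ i ∈ t, v i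

/-- The complete homogeneous symmetric polynomial `h_j` evaluated at the family
`v i`, `i ∈ s`. -/
def hsymF {R : Type*} [CommRing R] {σ : Type*} [DecidableEq σ]
    (s : Finset σ) (v : σ → R) (j : ℕ) : R :=
  ∑ m ∈ Finset.sym s j, (m.1.map v).prod

/-- The ring `Γ[X, Y]` in infinitely many variables `x_1, x_2, …` and
`y_1, y_2, …` (the index `0` variables are unused). -/
abbrev SR := MvPolynomial (ℕ ⊕ ℕ) GammaR

/-- The variable `x_k`. -/
def xx (k : ℕ) : SR := X (Sum.inl k)

/-- The variable `y_k`. -/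
def yy (k : ℕ) : SR := X (Sum.inr k)

/-- `h^r_j` evaluated at a family `v`: the complete homogeneous symmetric
polynomial `h_j` in `v_1, …, v_r` for `r ≥ 0`, and the elementary symmetric
polynomial `e_j` in `v_1, …, v_{-r}` for `r < 0` (so `h^0_j = δ_{0j}`). -/
def hkv (v : ℕ → SR) (r : ℤ) (j : ℕ) : SR :=
  if 0 ≤ r then hsymF (Finset.Icc 1 r.toNat) v j
  else esymF (Finset.Icc 1 (-r).toNat) v j

/-- `ᵏc^{k'}_p = ∑_{i,j ≥ 0} c_{p-i-j} h^{-k}_i(X) h^{k'}_j(-Y)`. -/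
def kc (k k' p : ℤ) : SR :=
  ∑ i ∈ Finset.range (p.toNat + 1), ∑ j ∈ Finset.range (p.toNat + 1),
    C (cQ (p - i - j)) * hkv xx (-k) i * hkv (fun t => -(yy t)) k' j

/-!
Everything is read off generating series in an auxiliary variable `t`. With
`C(t) = ∑ c_p t^p`, `E_n(t) = ∏_{a ≤ n} (1 + x_a t)` and `H_n(t) = ∏_{a ≤ n} (1 - x_a t)⁻¹`,
the series `∑_p ᵏc^r_p t^p` is `C(t) X_k(t) Y_r(t)`, where `X_k = E_k` for `k ≥ 0`, `X_k = H_{-k}`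
for `k < 0`, and `Y_r` only involves the `y`'s, which every `sᵢ` fixes.

For `i ≥ 1`, `sᵢ` fixes `C` and swaps `x_i, x_{i+1}`, so it fixes `X_k` unless `k = ±i`, and
`E_i - sᵢ E_i = (x_i - x_{i+1}) t E_{i-1}`, `H_i - sᵢ H_i = (x_i - x_{i+1}) t H_{i+1}`.
For `i = 0`, the rule for `s₀(c_p)` says `s₀ C = C (1 + x_1 t) / (1 - x_1 t)`, while
`x_1 ↦ -x_1` multiplies `X_k` (`k ≠ 0`) by the inverse factor; so `C X_k` is `s₀`-invariant, and
`C - s₀ C = -2 x_1 t C H_1`. Taking coefficients of `t^p` gives the claim, the case `p < 0`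
being trivial since then `ᵏc^r_p = 0`.
-/

theorem Finset.sym_succ_insert {α : Type*} [DecidableEq α] (a : α) (s : Finset α) (n : ℕ) :
    (insert a s).sym (n + 1) = s.sym (n + 1) ∪ ((insert a s).sym n).image (Sym.cons a) := by
  ext m
  simp only [Finset.mem_union, Finset.mem_image, Finset.mem_sym_iff, Finset.mem_insert]
  constructor
  · intro hm
    by_cases ha : a ∈ m
    · exact .inr ⟨m.erase a ha, fun b hb => hm b (Multiset.mem_of_mem_erase hb),
        m.cons_erase ha⟩
    · exact .inl fun b hb => (hm b hb).resolve_left (by rintro rfl; exact ha hb)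
  · rintro (hm | ⟨m, hm, rfl⟩) b hb
    · exact .inr (hm b hb)
    · exact (Sym.mem_cons.1 hb).elim .inl (hm b)

theorem Finset.sum_Icc_pow_mul_succ {R : Type*} [CommRing R] (a : R) (f : ℤ → R) (n : ℕ) :
    ∑ m ∈ Finset.Icc 1 (n + 1), a ^ m * f ((n : ℤ) + 1 - m) =
      a * f n + a * ∑ m ∈ Finset.Icc 1 n, a ^ m * f (n - m) := by
  rw [← Finset.insert_Icc_add_one_left_eq_Icc (by omega : 1 ≤ n + 1),
    Finset.sum_insert (by simp), ← Finset.map_add_right_Icc 1 n 1, Finset.sum_map, Finset.mul_sum]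
  congr 1
  · simp
  · refine Finset.sum_congr rfl fun m _ => ?_
    simp only [addRightEmbedding_apply, Nat.cast_add, Nat.cast_one, pow_succ]
    ring_nf

section SymmetricFunctions

open Finset

variable {R σ : Type*} [CommRing R] [DecidableEq σ]

theorem hsymF_zero (s : Finset σ) (v : σ → R) : hsymF s v 0 = 1 := by
  simp only [hsymF, sym_zero, sum_singleton]
  rfl

theorem esymF_succ_insert {a : σ} {s : Finset σ} (ha : a ∉ s) (v : σ → R) (j : ℕ) :
    esymF (insert a s) v (j + 1) = esymF s v (j + 1) + v a * esymF s v j := by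
  have hnot : ∀ t ∈ s.powersetCard j, a ∉ t := fun t ht hat =>
    ha ((mem_powersetCard.1 ht).1 hat)
  rw [esymF, powersetCard_succ_insert ha, sum_union, sum_image, esymF, esymF, mul_sum]
  · exact congrArg _ (sum_congr rfl fun t ht => prod_insert (hnot t ht))
  · intro t ht u hu htu
    rw [← erase_insert (hnot t ht), ← erase_insert (hnot u hu), htu]
  · refine disjoint_left.2 fun t ht ht' => ?_
    obtain ⟨u, -, rfl⟩ := mem_image.1 ht'
    exact ha ((mem_powersetCard.1 ht).1 (mem_insert_self a u))

theorem hsymF_succ_insert {a : σ} {s : Finset σ} (ha : a ∉ s) (v : σ → R) (j : ℕ) :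
    hsymF (insert a s) v (j + 1) = hsymF s v (j + 1) + v a * hsymF (insert a s) v j := by
  rw [hsymF, sym_succ_insert, sum_union, sum_image (fun _ _ _ _ => (Sym.cons_inj_right a _ _).1),
    hsymF, hsymF, mul_sum]
  · exact congrArg _ (sum_congr rfl fun m _ => by simp [Sym.cons, Multiset.map_cons])
  · refine disjoint_left.2 fun m hm hm' => ?_
    obtain ⟨m, -, rfl⟩ := mem_image.1 hm'
    exact ha (mem_sym_iff.1 hm a (Sym.mem_cons_self a m))

end SymmetricFunctions

theorem cQ_zero : cQ 0 = 1 := by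
  simp [cQ, cFree]

theorem cQ_of_neg {n : ℤ} (hn : n < 0) : cQ n = 0 := by
  simp [cQ, cFree, hn.le, hn.ne]

theorem kc_of_neg {p : ℤ} (hp : p < 0) (k r : ℤ) : kc k r p = 0 := by
  simp [kc, Int.toNat_of_nonpos hp.le, cQ_of_neg hp]

theorem hkv_natCast (v : ℕ → SR) (n : ℕ) : hkv v n = hsymF (Finset.Icc 1 n) v := by
  funext j
  simp [hkv]

-- Inside this namespace `C`, `X`, `coeff` and `map` refer to power series, not to the
-- `MvPolynomial` operations opened above.
namespace PowerSeries

section GeneratingSeries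

variable {R σ : Type*} [CommRing R] [DecidableEq σ]

theorem mk_mul_one_add_C_mul_X {f g : ℕ → R} {a : R} (h0 : g 0 = f 0)
    (h : ∀ n, g (n + 1) = f (n + 1) + a * f n) : mk f * (1 + C a * X) = mk g := by
  ext (_ | n) <;> simp [mul_add, ← mul_assoc, mul_comm _ X, mul_comm _ a, h0, h]

theorem one_sub_C_mul_X_mul_mk {f g : ℕ → R} {a : R} (h0 : f 0 = g 0)
    (h : ∀ n, f (n + 1) - a * f n = g (n + 1) + a * g n) :
    (1 - C a * X) * mk f = (1 + C a * X) * mk g := by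
  ext (_ | n)
  · simpa using h0
  · simpa [sub_mul, add_mul, mul_assoc] using h n

theorem isUnit_one_add_C_mul_X (a : R) : IsUnit (1 + C a * X) :=
  isUnit_iff_constantCoeff.2 (by simp)

theorem isUnit_one_sub_C_mul_X (a : R) : IsUnit (1 - C a * X) :=
  isUnit_iff_constantCoeff.2 (by simp)

theorem map_prod_of_perm {ι : Type*} {φ : R →+* R} (f : R → R⟦X⟧)
    (hf : ∀ b, map φ (f b) = f (φ b)) {v : ι → R} {s : Finset ι} (e : Equiv.Perm ι)
    (he : ∀ a, a ∈ s ↔ e a ∈ s) (hv : ∀ a ∈ s, φ (v a) = v (e a)) :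
    map φ (∏ a ∈ s, f (v a)) = ∏ a ∈ s, f (v a) := by
  rw [map_prod]
  exact Finset.prod_equiv e he fun a ha => by rw [hf, hv a ha]

theorem mk_esymF (s : Finset σ) (v : σ → R) :
    mk (esymF s v) = ∏ a ∈ s, (1 + C (v a) * X) := by
  induction s using Finset.induction_on with
  | empty =>
    ext (_ | n)
    · simp [esymF]
    · rw [coeff_mk, esymF, Finset.powersetCard_eq_empty.2 (by simp)]
      simp
  | insert a s ha ih =>
    rw [Finset.prod_insert ha, ← ih, mul_comm]
    exact (mk_mul_one_add_C_mul_X (by simp [esymF]) (esymF_succ_insert ha v)).symm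

theorem mk_hsymF_mul_prod (s : Finset σ) (v : σ → R) :
    mk (hsymF s v) * ∏ a ∈ s, (1 - C (v a) * X) = 1 := by
  induction s using Finset.induction_on with
  | empty =>
    ext (_ | n)
    · simp [hsymF_zero]
    · simp [hsymF]
  | insert a s ha ih =>
    rw [Finset.prod_insert ha, ← mul_assoc, sub_eq_add_neg, ← neg_mul, ← map_neg,
      mk_mul_one_add_C_mul_X (g := hsymF s v) (by simp [hsymF_zero]) (fun n => by
        rw [hsymF_succ_insert ha]; ring), ih]

end GeneratingSeries

-- Instance search does not find this instance (needed by `linear_combination`) on its own: it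
-- gets lost in the order-theoretic instances of `MvPowerSeries`.
instance : IsRightCancelAdd SR⟦X⟧ :=
  @AddRightCancelSemigroup.toIsRightCancelAdd SR⟦X⟧ inferInstance

theorem mk_hkv_natCast_mul_prod (v : ℕ → SR) (n : ℕ) :
    mk (hkv v n) * ∏ a ∈ Finset.Icc 1 n, (1 - C (v a) * X) = 1 := by
  rw [hkv_natCast]
  exact mk_hsymF_mul_prod _ _

theorem mk_hkv_neg_natCast (v : ℕ → SR) (n : ℕ) :
    mk (hkv v (-n)) = ∏ a ∈ Finset.Icc 1 n, (1 + C (v a) * X) := by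
  rcases n.eq_zero_or_pos with rfl | hn
  · simpa using mk_hkv_natCast_mul_prod v 0
  · rw [← mk_esymF (Finset.Icc 1 n) v]
    congr 1
    funext j
    simp [hkv, hn.ne']

theorem map_mk_hkv_natCast {φ : SR →+* SR} {v : ℕ → SR} {n : ℕ}
    (h : map φ (∏ a ∈ Finset.Icc 1 n, (1 - C (v a) * X)) =
      ∏ a ∈ Finset.Icc 1 n, (1 - C (v a) * X)) :
    map φ (mk (hkv v n)) = mk (hkv v n) := by
  have hinv := mk_hkv_natCast_mul_prod v n
  have hmap := congrArg (map φ) hinv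
  rw [map_mul, map_one, h] at hmap
  exact left_inv_eq_right_inv hmap (by rw [mul_comm, hinv])

theorem map_mk_hkv_of_perm {φ : SR →+* SR} {v : ℕ → SR} {r : ℤ} (e : Equiv.Perm ℕ)
    (he : ∀ a, a ∈ Finset.Icc 1 r.natAbs ↔ e a ∈ Finset.Icc 1 r.natAbs)
    (hv : ∀ a ∈ Finset.Icc 1 r.natAbs, φ (v a) = v (e a)) :
    map φ (mk (hkv v r)) = mk (hkv v r) := by
  rcases Int.natAbs_eq r with hr | hr <;> rw [hr]
  · exact map_mk_hkv_natCast (map_prod_of_perm (R := SR) (fun b => 1 - C b * X) (by simp) e he hv)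
  · rw [mk_hkv_neg_natCast]
    exact map_prod_of_perm (R := SR) (fun b => 1 + C b * X) (by simp) e he hv

def cSeries : SR⟦X⟧ := mk fun n => MvPolynomial.C (cQ n)

def xSeries (k : ℤ) : SR⟦X⟧ := mk (hkv xx (-k))

def ySeries (r : ℤ) : SR⟦X⟧ := mk (hkv (fun t => -yy t) r)

def kcSeries (k r : ℤ) : SR⟦X⟧ := cSeries * xSeries k * ySeries r

theorem kc_natCast_eq_coeff (k r : ℤ) (n : ℕ) : kc k r n = coeff n (kcSeries k r) := by
  rw [show kcSeries k r = xSeries k * (ySeries r * cSeries) by unfold kcSeries; ring, kc,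
    Int.toNat_natCast, coeff_mul, Finset.Nat.sum_antidiagonal_eq_sum_range_succ
      (fun i l => coeff i (xSeries k) * coeff l (ySeries r * cSeries))]
  refine Finset.sum_congr rfl fun i hi => ?_
  rw [Finset.mem_range] at hi
  -- `kc` sums over a square, but the terms with `i + j > n` vanish since `c_q = 0` for `q < 0`.
  rw [coeff_mul, Finset.Nat.sum_antidiagonal_eq_sum_range_succ
      (fun j l => coeff j (ySeries r) * coeff l cSeries), Finset.mul_sum,
    ← Finset.sum_subset (Finset.range_subset_range.2 (by omega : n - i + 1 ≤ n + 1))]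
  · refine Finset.sum_congr rfl fun j hj => ?_
    rw [Finset.mem_range] at hj
    have hcast : (n : ℤ) - i - j = ((n - i - j : ℕ) : ℤ) := by omega
    simp only [xSeries, ySeries, cSeries, coeff_mk, hcast]
    ring
  · intro j _ hj
    rw [Finset.mem_range] at hj
    rw [cQ_of_neg (by omega), map_zero, zero_mul, zero_mul]

theorem kc_sub_map_of_kcSeries {φ : SR →+* SR} {k k' r : ℤ} {D : SR}
    (h : kcSeries k r - map φ (kcSeries k r) = C D * X * kcSeries k' r) (p : ℤ) :
    kc k r p - φ (kc k r p) = D * kc k' r (p - 1) := by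
  rcases lt_or_ge p 0 with hp | hp
  · rw [kc_of_neg hp, kc_of_neg (by omega), map_zero, sub_self, mul_zero]
  obtain ⟨n, rfl⟩ := Int.eq_ofNat_of_zero_le hp
  have hn := congrArg (coeff n) h
  rw [map_sub, coeff_map, mul_assoc, coeff_C_mul, ← kc_natCast_eq_coeff] at hn
  rw [hn]
  rcases n with _ | n
  · rw [coeff_zero_X_mul, kc_of_neg (by omega), mul_zero]
  · rw [coeff_succ_X_mul, ← kc_natCast_eq_coeff]
    push_cast
    ring_nf

theorem map_kc_of_kcSeries {φ : SR →+* SR} {k r : ℤ} (h : map φ (kcSeries k r) = kcSeries k r)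
    (p : ℤ) : φ (kc k r p) = kc k r p := by
  rcases lt_or_ge p 0 with hp | hp
  · rw [kc_of_neg hp, map_zero]
  obtain ⟨n, rfl⟩ := Int.eq_ofNat_of_zero_le hp
  rw [kc_natCast_eq_coeff, ← coeff_map, h]

theorem map_ySeries {φ : SR →+* SR} (hy : ∀ j, 1 ≤ j → φ (yy j) = yy j) (r : ℤ) :
    map φ (ySeries r) = ySeries r :=
  map_mk_hkv_of_perm (Equiv.refl ℕ) (fun _ => Iff.rfl) fun a ha => by
    simp [hy a (Finset.mem_Icc.1 ha).1]

section SimpleReflection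

variable {φ : SR →+* SR} {i : ℕ}

theorem apply_xx_eq_xx_swap (hxi : φ (xx i) = xx (i + 1)) (hxi1 : φ (xx (i + 1)) = xx i)
    (hxo : ∀ j, 1 ≤ j → j ≠ i → j ≠ i + 1 → φ (xx j) = xx j) (a : ℕ) (ha : 1 ≤ a) :
    φ (xx a) = xx (Equiv.swap i (i + 1) a) := by
  rw [Equiv.swap_apply_def]
  split_ifs with h1 h2
  · rw [h1, hxi]
  · rw [h2, hxi1]
  · exact hxo a ha h1 h2

theorem mem_Icc_iff_swap_mem_Icc (hi : 1 ≤ i) {n : ℕ} (hn : n ≠ i) (a : ℕ) :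
    a ∈ Finset.Icc 1 n ↔ Equiv.swap i (i + 1) a ∈ Finset.Icc 1 n := by
  simp only [Finset.mem_Icc, Equiv.swap_apply_def]
  split_ifs <;> omega

theorem map_prod_Icc_of_swap (f : SR → SR⟦X⟧) (hf : ∀ b, map φ (f b) = f (φ b))
    (hi : 1 ≤ i) (hφ : ∀ a, 1 ≤ a → φ (xx a) = xx (Equiv.swap i (i + 1) a)) {n : ℕ}
    (hn : n ≠ i) :
    map φ (∏ a ∈ Finset.Icc 1 n, f (xx a)) = ∏ a ∈ Finset.Icc 1 n, f (xx a) :=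
  map_prod_of_perm f hf _ (mem_Icc_iff_swap_mem_Icc hi hn) fun a ha => hφ a (Finset.mem_Icc.1 ha).1

theorem map_xSeries_of_swap (hi : 1 ≤ i)
    (hφ : ∀ a, 1 ≤ a → φ (xx a) = xx (Equiv.swap i (i + 1) a))
    {k : ℤ} (hk : ¬(k = i ∨ k = -i)) : map φ (xSeries k) = xSeries k :=
  map_mk_hkv_of_perm _ (mem_Icc_iff_swap_mem_Icc hi (by omega)) fun a ha =>
    hφ a (Finset.mem_Icc.1 ha).1

theorem xSeries_natCast_sub_map (hi : 1 ≤ i)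
    (hφ : ∀ a, 1 ≤ a → φ (xx a) = xx (Equiv.swap i (i + 1) a)) :
    xSeries i - map φ (xSeries i) = C (xx i - xx (i + 1)) * X * xSeries (i - 1) := by
  obtain ⟨m, rfl⟩ : ∃ m, i = m + 1 := ⟨i - 1, by omega⟩
  have hE := map_prod_Icc_of_swap (fun b => 1 + C b * X) (by simp) hi hφ (n := m) (by omega)
  rw [show ((m + 1 : ℕ) : ℤ) - 1 = m by push_cast; ring, xSeries, xSeries,
    mk_hkv_neg_natCast, mk_hkv_neg_natCast, Finset.prod_Icc_succ_top (by omega), map_mul, hE]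
  simp [hφ (m + 1) (by omega)]
  ring

theorem xSeries_neg_natCast_sub_map (hi : 1 ≤ i)
    (hφ : ∀ a, 1 ≤ a → φ (xx a) = xx (Equiv.swap i (i + 1) a)) :
    xSeries (-i) - map φ (xSeries (-i)) = C (xx i - xx (i + 1)) * X * xSeries (-i - 1) := by
  obtain ⟨m, rfl⟩ : ∃ m, i = m + 1 := ⟨i - 1, by omega⟩
  have hP := map_prod_Icc_of_swap (fun b => 1 - C b * X) (by simp) hi hφ (n := m) (by omega)
  have hH := mk_hkv_natCast_mul_prod xx (m + 1)
  have hH' := mk_hkv_natCast_mul_prod xx (m + 2)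
  rw [Finset.prod_Icc_succ_top (by omega)] at hH
  rw [Finset.prod_Icc_succ_top (by omega), Finset.prod_Icc_succ_top (by omega)] at hH'
  have hφH := congrArg (map φ) hH
  simp only [map_mul, map_one, map_sub, map_C, map_X, hP, hφ (m + 1) (by omega),
    Equiv.swap_apply_left] at hφH
  simp only [xSeries, neg_neg]
  rw [show -(-((m + 1 : ℕ) : ℤ) - 1) = ((m + 2 : ℕ) : ℤ) by push_cast; ring]
  refine (IsUnit.of_mul_eq_one_right _ hH').mul_right_cancel ?_
  rw [map_sub]
  linear_combination (1 - C (xx (m + 2)) * X) * hH - (1 - C (xx (m + 1)) * X) * hφH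
    - (C (xx (m + 1)) - C (xx (m + 1 + 1))) * X * hH'

theorem map_cSeries (hc : ∀ p : ℕ, φ (MvPolynomial.C (cQ p)) = MvPolynomial.C (cQ p)) :
    map φ cSeries = cSeries := by
  ext n
  simp [cSeries, hc]

theorem map_kcSeries_of_swap (hi : 1 ≤ i)
    (hφ : ∀ a, 1 ≤ a → φ (xx a) = xx (Equiv.swap i (i + 1) a))
    (hc : ∀ p : ℕ, φ (MvPolynomial.C (cQ p)) = MvPolynomial.C (cQ p))
    (hy : ∀ j, 1 ≤ j → φ (yy j) = yy j) {k : ℤ} (hk : ¬(k = i ∨ k = -i)) (r : ℤ) :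
    map φ (kcSeries k r) = kcSeries k r := by
  rw [kcSeries, map_mul, map_mul, map_cSeries hc, map_ySeries hy, map_xSeries_of_swap hi hφ hk]

theorem kcSeries_sub_map_of_swap (hi : 1 ≤ i)
    (hφ : ∀ a, 1 ≤ a → φ (xx a) = xx (Equiv.swap i (i + 1) a))
    (hc : ∀ p : ℕ, φ (MvPolynomial.C (cQ p)) = MvPolynomial.C (cQ p))
    (hy : ∀ j, 1 ≤ j → φ (yy j) = yy j) {k : ℤ} (hk : k = i ∨ k = -i) (r : ℤ) :
    kcSeries k r - map φ (kcSeries k r) = C (xx i - xx (i + 1)) * X * kcSeries (k - 1) r := by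
  have hx : xSeries k - map φ (xSeries k) = C (xx i - xx (i + 1)) * X * xSeries (k - 1) := by
    rcases hk with rfl | rfl
    · exact xSeries_natCast_sub_map hi hφ
    · exact xSeries_neg_natCast_sub_map hi hφ
  simp only [kcSeries, map_mul, map_cSeries hc, map_ySeries hy]
  linear_combination cSeries * ySeries r * hx

end SimpleReflection

section FirstReflection

variable {φ : SR →+* SR}

theorem one_sub_mul_map_cSeries
    (h0c : ∀ p : ℕ, 1 ≤ p → φ (MvPolynomial.C (cQ p)) =
      MvPolynomial.C (cQ p) +
        2 * ∑ m ∈ Finset.Icc 1 p, xx 1 ^ m * MvPolynomial.C (cQ (p - m))) :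
    (1 - C (xx 1) * X) * map φ cSeries = (1 + C (xx 1) * X) * cSeries := by
  have hφc : ∀ p : ℕ, φ (MvPolynomial.C (cQ p)) =
      MvPolynomial.C (cQ p) +
        2 * ∑ m ∈ Finset.Icc 1 p, xx 1 ^ m * MvPolynomial.C (cQ (p - m)) := by
    intro p
    rcases p.eq_zero_or_pos with rfl | hp
    · simp [cQ_zero]
    · exact h0c p hp
  have hmap : map φ cSeries = mk fun n => φ (MvPolynomial.C (cQ n)) := by
    ext n
    simp [cSeries]
  rw [hmap, cSeries]
  refine one_sub_C_mul_X_mul_mk (a := xx 1) (by simp [cQ_zero]) fun n => ?_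
  rw [hφc, hφc, Nat.cast_succ,
    Finset.sum_Icc_pow_mul_succ (xx 1) (fun q => MvPolynomial.C (cQ q)) n]
  ring

theorem one_add_mul_map_xSeries (hx1 : φ (xx 1) = -xx 1)
    (hx2 : ∀ j, 2 ≤ j → φ (xx j) = xx j)
    {k : ℤ} (hk : k ≠ 0) :
    (1 + C (xx 1) * X) * map φ (xSeries k) = (1 - C (xx 1) * X) * xSeries k := by
  have hfix : ∀ f : SR → SR⟦X⟧, (∀ b, map φ (f b) = f (φ b)) → ∀ n,
      map φ (∏ a ∈ Finset.Icc 2 n, f (xx a)) = ∏ a ∈ Finset.Icc 2 n, f (xx a) :=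
    fun f hf n => map_prod_of_perm f hf (Equiv.refl ℕ) (fun _ => Iff.rfl) fun a ha => by
      simp [hx2 a (Finset.mem_Icc.1 ha).1]
  obtain ⟨m, hm⟩ : ∃ m : ℕ, k.natAbs = m + 1 := ⟨k.natAbs - 1, by omega⟩
  have hIcc : Finset.Icc 1 (m + 1) = insert 1 (Finset.Icc 2 (m + 1)) :=
    (Finset.insert_Icc_add_one_left_eq_Icc (by omega)).symm
  rcases Int.natAbs_eq k with hk' | hk' <;> rw [hk', hm, xSeries]
  · rw [mk_hkv_neg_natCast, hIcc, Finset.prod_insert (by simp), map_mul,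
      hfix (fun b => 1 + C b * X) (by simp)]
    simp [hx1]
    ring
  · rw [neg_neg]
    have hH := mk_hkv_natCast_mul_prod xx (m + 1)
    rw [hIcc, Finset.prod_insert (by simp), ← mul_assoc] at hH
    have hφH := congrArg (map φ) hH
    simp only [map_mul, map_one, map_sub, map_C, map_X, hx1, map_neg,
      hfix (fun b => 1 - C b * X) (by simp)] at hφH
    refine (IsUnit.of_mul_eq_one_right _ hH).mul_right_cancel ?_
    linear_combination hφH - hH

theorem map_kcSeries_of_reflection (hx1 : φ (xx 1) = -xx 1)
    (hx2 : ∀ j, 2 ≤ j → φ (xx j) = xx j)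
    (h0c : ∀ p : ℕ, 1 ≤ p → φ (MvPolynomial.C (cQ p)) =
      MvPolynomial.C (cQ p) +
        2 * ∑ m ∈ Finset.Icc 1 p, xx 1 ^ m * MvPolynomial.C (cQ (p - m)))
    (hy : ∀ j, 1 ≤ j → φ (yy j) = yy j) {k : ℤ} (hk : k ≠ 0) (r : ℤ) :
    map φ (kcSeries k r) = kcSeries k r := by
  refine ((isUnit_one_sub_C_mul_X (xx 1)).mul (isUnit_one_add_C_mul_X (xx 1))).mul_left_cancel ?_
  rw [kcSeries, map_mul, map_mul, map_ySeries hy]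
  linear_combination
    ((1 + C (xx 1) * X) * map φ (xSeries k) * ySeries r) * one_sub_mul_map_cSeries h0c
      + ((1 + C (xx 1) * X) * cSeries * ySeries r) * one_add_mul_map_xSeries hx1 hx2 hk

theorem kcSeries_zero_sub_map_of_reflection
    (h0c : ∀ p : ℕ, 1 ≤ p → φ (MvPolynomial.C (cQ p)) =
      MvPolynomial.C (cQ p) +
        2 * ∑ m ∈ Finset.Icc 1 p, xx 1 ^ m * MvPolynomial.C (cQ (p - m)))
    (hy : ∀ j, 1 ≤ j → φ (yy j) = yy j) (r : ℤ) :
    kcSeries 0 r - map φ (kcSeries 0 r) = C (-(2 * xx 1)) * X * kcSeries (-1) r := by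
  have hx0 : xSeries 0 = 1 := by simpa [xSeries] using mk_hkv_neg_natCast xx 0
  have hx1 : xSeries (-1) * (1 - C (xx 1) * X) = 1 := by
    simpa [xSeries] using mk_hkv_natCast_mul_prod xx 1
  refine (IsUnit.of_mul_eq_one_right _ hx1).mul_right_cancel ?_
  rw [kcSeries, kcSeries, hx0, map_mul, map_mul, map_one, map_ySeries hy, map_neg, map_mul,
    map_ofNat]
  linear_combination (-ySeries r) * one_sub_mul_map_cSeries h0c
    + (2 * C (xx 1) * X * cSeries * ySeries r) * hx1

end FirstReflection

end PowerSeries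

/-- `s i` is the action of the simple reflection `sᵢ` of `W_∞`, pinned down by its values on the
generators. The identity `∂ᵢ(ᵏc^r_p) = …` is stated multiplied through by the denominator of `∂ᵢ`,
which is `-2x_1` for `i = 0` and `x_i - x_{i+1}` for `i ≥ 1`. -/
theorem divided_difference_kc
    (s : ℕ → (SR →+* SR))
    (h0x1 : s 0 (xx 1) = -xx 1)
    (h0x : ∀ j : ℕ, 2 ≤ j → s 0 (xx j) = xx j)
    (h0y : ∀ j : ℕ, 1 ≤ j → s 0 (yy j) = yy j)
    (h0c : ∀ p : ℕ, 1 ≤ p →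
      s 0 (C (cQ (p : ℤ))) =
        C (cQ (p : ℤ)) +
          2 * ∑ m ∈ Finset.Icc 1 p, xx 1 ^ m * C (cQ ((p : ℤ) - m)))
    (hx : ∀ i : ℕ, 1 ≤ i →
      s i (xx i) = xx (i + 1) ∧ s i (xx (i + 1)) = xx i ∧
        ∀ j : ℕ, 1 ≤ j → j ≠ i → j ≠ i + 1 → s i (xx j) = xx j)
    (hy : ∀ i : ℕ, 1 ≤ i → ∀ j : ℕ, 1 ≤ j → s i (yy j) = yy j)
    (hc : ∀ i : ℕ, 1 ≤ i → ∀ p : ℕ, s i (C (cQ (p : ℤ))) = C (cQ (p : ℤ))) :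
    ∀ (i : ℕ) (k r p : ℤ),
      kc k r p - s i (kc k r p) =
        (if i = 0 then -(2 * xx 1) else xx i - xx (i + 1)) *
          (if k = (i : ℤ) ∨ k = -(i : ℤ) then kc (k - 1) r (p - 1) else 0) := by
  intro i k r p
  rcases Nat.eq_zero_or_pos i with rfl | hi
  · rw [if_pos rfl]
    by_cases hk : k = 0
    · subst hk
      rw [if_pos (by simp)]
      exact PowerSeries.kc_sub_map_of_kcSeries
        (PowerSeries.kcSeries_zero_sub_map_of_reflection h0c h0y r) p
    · rw [if_neg (by simpa using hk), mul_zero, sub_eq_zero, PowerSeries.map_kc_of_kcSeries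
        (PowerSeries.map_kcSeries_of_reflection h0x1 h0x h0c h0y hk r)]
  · obtain ⟨hxi, hxi1, hxo⟩ := hx i hi
    have hφ := PowerSeries.apply_xx_eq_xx_swap hxi hxi1 hxo
    rw [if_neg hi.ne']
    split_ifs with hk
    · exact PowerSeries.kc_sub_map_of_kcSeries
        (PowerSeries.kcSeries_sub_map_of_swap hi hφ (hc i hi) (hy i hi) hk r) p
    · rw [mul_zero, sub_eq_zero, PowerSeries.map_kc_of_kcSeries
        (PowerSeries.map_kcSeries_of_swap hi hφ (hc i hi) (hy i hi) hk r)]
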